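/- Let 𝒮 = (T_1, ..., T_k) be a greedy tree packing of a graph H whose total number of trees is k, and suppose the minimum cut of H has value λ' and the packing has size k ≥ βλ' for suitable constant β. Then at least a constant fraction of the trees T_i in 𝒮 have at most 2 edges crossing the minimum cut of H (i.e., the minimum cut 2-respects a constant fraction of the trees). -/
import Mathlib


open Finset

/-- An edge `e` crosses the cut `(A, Aᶜ)` if its endpoints lie on opposite sides. -/
def Crosses {V E : Type*} (ends : E → Sym2 V) (A : Finset V) (e : E) : Prop :=
  ∃ u v : V, ends e = s(u, v) ∧ u ∈ A ∧ v ∉ A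

instance {V E : Type*} [Fintype V] [DecidableEq V] (ends : E → Sym2 V)
    (A : Finset V) (e : E) : Decidable (Crosses ends A e) :=
  inferInstanceAs (Decidable (∃ u v : V, ends e = s(u, v) ∧ u ∈ A ∧ v ∉ A))

/-- A finite set of multigraph edges is a forest (acyclic) iff every nonempty
subset of edges spans strictly more vertices than it has edges. -/
def IsForest {V E : Type*} (ends : E → Sym2 V) (F : Finset E) : Prop :=
  ∀ F' : Finset E, F' ⊆ F → F'.Nonempty →
    F'.card < Nat.card {v : V | ∃ e ∈ F', v ∈ ends e}

/-- A spanning tree of a connected graph on vertex set `V`: an acyclic edge set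
with `|V| - 1` edges. -/
def IsSpanningTree {V E : Type*} [Fintype V] (ends : E → Sym2 V) (T : Finset E) : Prop :=
  IsForest ends T ∧ T.card + 1 = Fintype.card V

/-- Karger's structural lemma on greedy tree packings: there are constants
`β, γ > 0` such that for every greedy tree packing `𝒮 = (T 1, …, T k)` of a
weighted graph `H` (each `T i` a minimum spanning tree w.r.t. the loads induced
by the previous trees, and no edge loaded beyond its weight) with minimum cut
value `λ'` and `k ≥ β λ'`, at least a `γ` fraction of the trees have at most
`2` edges crossing the minimum cut of `H`, i.e. the minimum cut `2`-respects a
constant fraction of the trees. -/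
theorem greedy_packing_two_respects :
    ∃ β γ : ℝ, 0 < β ∧ 0 < γ ∧
      ∀ (V E : Type) (_ : Fintype V) (_ : Fintype E) (_ : DecidableEq V)
        (_ : DecidableEq E)
        (ends : E → Sym2 V) (wt : E → ℝ) (_ : ∀ e, 0 ≤ wt e)
        (k : ℕ) (T : Fin k → Finset E)
        (_ : ∀ i, IsSpanningTree ends (T i))
        (_ : ∀ e : E, (((Finset.univ.filter fun i : Fin k => e ∈ T i).card : ℝ)) ≤ wt e)
        (_ : ∀ i : Fin k, ∀ T' : Finset E, IsSpanningTree ends T' →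
          ∑ e ∈ T i, (((Finset.univ.filter fun j : Fin k => j < i ∧ e ∈ T j).card : ℝ))
            ≤ ∑ e ∈ T', (((Finset.univ.filter fun j : Fin k => j < i ∧ e ∈ T j).card : ℝ)))
        (lam' : ℝ) (Amin : Finset V) (_ : Amin.Nonempty) (_ : Amin ≠ Finset.univ)
        (_ : lam' = ∑ e ∈ Finset.univ.filter (fun e => Crosses ends Amin e), wt e)
        (_ : ∀ A : Finset V, A.Nonempty → A ≠ Finset.univ →
          lam' ≤ ∑ e ∈ Finset.univ.filter (fun e => Crosses ends A e), wt e)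
        (_ : (k : ℝ) ≥ β * lam'),
        γ * k ≤ ((Finset.univ.filter fun i : Fin k =>
          ((T i).filter fun e => Crosses ends Amin e).card ≤ 2).card : ℝ) := by
  refine ⟨1, 1/2, one_pos, by norm_num, ?_⟩
  intro V E _ _ _ _ ends wt hwt k T hST hload hgreedy lam' Amin hA1 hA2 hlam hmin hk
  classical
  set C : Finset E := Finset.univ.filter (fun e => Crosses ends Amin e) with hC
  -- total number of cut edges over all trees, as a natural number
  have hswap : ∑ i : Fin k, ((T i).filter fun e => Crosses ends Amin e).card
      = ∑ e ∈ C, (Finset.univ.filter fun i : Fin k => e ∈ T i).card := by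
    have h1 : ∀ i : Fin k, ((T i).filter fun e => Crosses ends Amin e)
        = C.filter (fun e => e ∈ T i) := by
      intro i
      ext e
      simp [hC, and_comm]
    simp only [h1, Finset.card_filter]
    rw [Finset.sum_comm]
  have hS : (∑ i : Fin k, (((T i).filter fun e => Crosses ends Amin e).card : ℝ)) ≤ lam' := by
    rw [hlam]
    have h2 := congrArg (fun n : ℕ => (n : ℝ)) hswap
    push_cast at h2
    rw [h2]
    exact Finset.sum_le_sum fun e _ => hload e
  have hlamk : lam' ≤ (k : ℝ) := by linarith [hk]
  -- bad trees
  set B : Finset (Fin k) := Finset.univ.filter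
    (fun i : Fin k => ¬ ((T i).filter fun e => Crosses ends Amin e).card ≤ 2) with hB
  have hBle : (3 : ℝ) * B.card ≤ ∑ i : Fin k, (((T i).filter fun e => Crosses ends Amin e).card : ℝ) := by
    have h1 : ∑ i ∈ B, (3 : ℝ) ≤ ∑ i ∈ B, (((T i).filter fun e => Crosses ends Amin e).card : ℝ) := by
      refine Finset.sum_le_sum ?_
      intro i hi
      rw [hB, Finset.mem_filter] at hi
      have h3 : 3 ≤ ((T i).filter fun e => Crosses ends Amin e).card := by omega
      exact_mod_cast h3
    have h2 : ∑ i ∈ B, (((T i).filter fun e => Crosses ends Amin e).card : ℝ)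
        ≤ ∑ i : Fin k, (((T i).filter fun e => Crosses ends Amin e).card : ℝ) :=
      Finset.sum_le_sum_of_subset_of_nonneg (Finset.subset_univ _)
        (fun i _ _ => by positivity)
    simpa [mul_comm] using h1.trans h2
  have hcard : (Finset.univ.filter fun i : Fin k =>
      ((T i).filter fun e => Crosses ends Amin e).card ≤ 2).card + B.card = k := by
    rw [hB]
    rw [Finset.card_filter_add_card_filter_not]
    simp
  have hBreal : (3 : ℝ) * B.card ≤ (k : ℝ) := le_trans hBle (hS.trans hlamk)
  have : ((Finset.univ.filter fun i : Fin k =>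
      ((T i).filter fun e => Crosses ends Amin e).card ≤ 2).card : ℝ) = (k : ℝ) - B.card := by
    have := hcard
    push_cast [← this]
    ring
  rw [this]
  linarith [hBreal]
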